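/- Let A be the star network matrix above with sensor node 1 and n ≥ 3. The minimal Frobenius norm δ(n) of a star-pattern-structured perturbation Δ for which (A+Δ, e₁^T) has an unobservable eigenvalue equals min{ a_{12}, a_{13}, …, a_{1n}, min_{2≤i<j≤n} |a_{ii} − a_{jj}|/√2 }, assuming all entries a_{ij} are positive. -/

import Mathlib

/-- Frobenius norm of a real matrix. -/
noncomputable def frobNorm {n : ℕ} (M : Matrix (Fin n) (Fin n) ℝ) : ℝ :=
  Real.sqrt (∑ i, ∑ j, (M i j) ^ 2)

/-- Star sparsity pattern: nonzero entries only on first row, first column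
and diagonal. -/
def starPattern {n : ℕ} (M : Matrix (Fin n) (Fin n) ℝ) : Prop :=
  ∀ i j : Fin n, i ≠ j → (i : ℕ) ≠ 0 → (j : ℕ) ≠ 0 → M i j = 0

/-! An eigenvector `x` of a star matrix `M` with `x₀ = 0` satisfies `Mₖₖ xₖ = λ xₖ` at every
leaf `k` and `∑ₖ M₀ₖ xₖ = 0` at the hub. Hence either `x` lives on a single leaf `k`, forcing
`M₀ₖ = 0`, or on several leaves whose diagonal entries all equal `λ`; conversely each situation
yields such an eigenvector. Cancelling `a₁ⱼ` costs `a₁ⱼ` in Frobenius norm, while equalising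
`aᵢᵢ` and `aⱼⱼ` costs at least `|aᵢᵢ - aⱼⱼ| / √2`, with equality when both move halfway. -/

open Finset Matrix

section
variable {n : ℕ}

theorem sq_entry_le_sum_sq (M : Matrix (Fin n) (Fin n) ℝ) (i j : Fin n) :
    M i j ^ 2 ≤ ∑ p, ∑ q, M p q ^ 2 :=
  (single_le_sum (fun q _ => sq_nonneg (M i q)) (mem_univ j)).trans
    (single_le_sum (fun p _ => sum_nonneg fun q _ => sq_nonneg (M p q)) (mem_univ i))

theorem abs_entry_le_frobNorm (M : Matrix (Fin n) (Fin n) ℝ) (i j : Fin n) :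
    |M i j| ≤ frobNorm M :=
  Real.abs_le_sqrt (sq_entry_le_sum_sq M i j)

theorem abs_sub_diag_le_frobNorm (M : Matrix (Fin n) (Fin n) ℝ) {i j : Fin n} (hij : i ≠ j) :
    |M i i - M j j| ≤ √2 * frobNorm M := by
  have hdiag : M i i ^ 2 + M j j ^ 2 ≤ ∑ p, ∑ q, M p q ^ 2 :=
    calc M i i ^ 2 + M j j ^ 2 ≤ ∑ p, M p p ^ 2 :=
          add_le_sum (fun p _ => sq_nonneg (M p p)) (mem_univ i) (mem_univ j) hij
      _ ≤ ∑ p, ∑ q, M p q ^ 2 :=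
          sum_le_sum fun p _ => single_le_sum (fun q _ => sq_nonneg (M p q)) (mem_univ p)
  rw [frobNorm, ← Real.sqrt_mul zero_le_two]
  apply Real.abs_le_sqrt
  nlinarith [sq_nonneg (M i i + M j j)]

theorem frobNorm_single (i j : Fin n) (c : ℝ) : frobNorm (single i j c) = |c| := by
  rw [frobNorm, Fintype.sum_eq_single (M := ℝ) i, Fintype.sum_eq_single (M := ℝ) j,
    single_apply_same, Real.sqrt_sq_eq_abs]
  · intro q hq; simp [hq.symm]
  · intro p hp; simp [single_apply_of_row_ne hp.symm]

theorem frobNorm_diagonal (d : Fin n → ℝ) : frobNorm (diagonal d) = √(∑ i, d i ^ 2) := by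
  refine congrArg Real.sqrt (sum_congr rfl fun p _ => ?_)
  rw [Fintype.sum_eq_single p, diagonal_apply_eq]
  intro q hq; simp [diagonal_apply_ne _ hq.symm]

theorem frobNorm_diagonal_single_sub_single {i j : Fin n} (hij : i ≠ j) (a : ℝ) :
    frobNorm (diagonal (Pi.single i a - Pi.single j a)) = √2 * |a| := by
  rw [frobNorm_diagonal, Fintype.sum_eq_add i j hij]
  · simp [hij, hij.symm, ← two_mul, Real.sqrt_mul zero_le_two, Real.sqrt_sq_eq_abs]
  · rintro k ⟨hki, hkj⟩; simp [hki, hkj]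

theorem starPattern.add {M N : Matrix (Fin n) (Fin n) ℝ} (hM : starPattern M)
    (hN : starPattern N) : starPattern (M + N) := fun i j hij hi hj => by
  rw [Matrix.add_apply, hM i j hij hi hj, hN i j hij hi hj, add_zero]

theorem starPattern_diagonal (d : Fin n → ℝ) : starPattern (diagonal d) :=
  fun _ _ hij _ _ => diagonal_apply_ne d hij

theorem starPattern_single_of_val_eq_zero {r : Fin n} (hr : (r : ℕ) = 0) (j : Fin n) (c : ℝ) :
    starPattern (single r j c) :=
  fun _ _ _ hi _ => single_apply_of_row_ne (fun h => hi (by subst h; exact hr)) _ _ _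

variable (h0 : 0 < n)

/-- `(M, e₁ᵀ)` has an unobservable eigenvalue; the paper's sensor node `1` is the index `0`. -/
def IsUnobservable (M : Matrix (Fin n) (Fin n) ℝ) : Prop :=
  ∃ (lam : ℂ) (x : Fin n → ℂ), x ≠ 0 ∧ x ⟨0, h0⟩ = 0 ∧ (M.map Complex.ofReal).mulVec x = lam • x

variable {h0} {M A : Matrix (Fin n) (Fin n) ℝ}

theorem starPattern.mulVec_apply (hM : starPattern M) {x : Fin n → ℂ} (hx : x ⟨0, h0⟩ = 0)
    {k : Fin n} (hk : (k : ℕ) ≠ 0) : (M.map Complex.ofReal *ᵥ x) k = M k k * x k := by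
  refine (Fintype.sum_eq_single k fun b hb => ?_).trans (by rfl)
  by_cases hb0 : (b : ℕ) = 0
  · rw [show b = ⟨0, h0⟩ from Fin.ext hb0, hx, mul_zero]
  · change (M k b : ℂ) * x b = 0
    rw [hM k b (Ne.symm hb) hk hb0, Complex.ofReal_zero, zero_mul]

theorem starPattern.mulVec_eq_smul (hM : starPattern M) {x : Fin n → ℂ} (hx : x ⟨0, h0⟩ = 0)
    {lam : ℂ} (hrow : ∑ k, (M ⟨0, h0⟩ k : ℂ) * x k = 0)
    (hdiag : ∀ k : Fin n, (k : ℕ) ≠ 0 → x k ≠ 0 → (M k k : ℂ) = lam) :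
    (M.map Complex.ofReal).mulVec x = lam • x := by
  funext k
  rw [Pi.smul_apply, smul_eq_mul]
  by_cases hk : (k : ℕ) = 0
  · rw [show k = ⟨0, h0⟩ from Fin.ext hk, hx, mul_zero]
    exact hrow
  · rw [hM.mulVec_apply hx hk]
    by_cases hxk : x k = 0
    · rw [hxk, mul_zero, mul_zero]
    · rw [hdiag k hk hxk]

theorem isUnobservable_of_row_entry_eq_zero (hM : starPattern M) {j : Fin n} (hj : (j : ℕ) ≠ 0)
    (hMj : M ⟨0, h0⟩ j = 0) : IsUnobservable h0 M := by
  have hj0 : (⟨0, h0⟩ : Fin n) ≠ j := fun h => hj (by rw [← h])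
  refine ⟨M j j, Pi.single j 1, by simp, Pi.single_eq_of_ne hj0 _, hM.mulVec_eq_smul
    (Pi.single_eq_of_ne hj0 _) ?_ fun k _ hk => ?_⟩
  · rw [Fintype.sum_eq_single j]
    · rw [hMj]; simp
    · intro k hk; simp [hk]
  · obtain rfl : k = j := by_contra fun h => hk (Pi.single_eq_of_ne h _)
    rfl

theorem isUnobservable_of_diag_eq (hM : starPattern M) {i j : Fin n} (hi : (i : ℕ) ≠ 0)
    (hj : (j : ℕ) ≠ 0) (hij : i ≠ j) (hMij : M i i = M j j) : IsUnobservable h0 M := by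
  -- the hub row annihilates `M₀ⱼ eᵢ - M₀ᵢ eⱼ`, which is nonzero unless `M₀ⱼ = 0`
  by_cases hMj : M ⟨0, h0⟩ j = 0
  · exact isUnobservable_of_row_entry_eq_zero hM hj hMj
  have hi0 : (⟨0, h0⟩ : Fin n) ≠ i := fun h => hi (by rw [← h])
  have hj0 : (⟨0, h0⟩ : Fin n) ≠ j := fun h => hj (by rw [← h])
  set x : Fin n → ℂ := Pi.single i (M ⟨0, h0⟩ j : ℂ) - Pi.single j (M ⟨0, h0⟩ i : ℂ)
  have hxi : x i = M ⟨0, h0⟩ j := by simp [x, hij]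
  have hx0 : x ⟨0, h0⟩ = 0 := by simp [x, hi0, hj0]
  refine ⟨M i i, x, fun hx => hMj ?_, hx0, hM.mulVec_eq_smul hx0 ?_ fun k _ hk => ?_⟩
  · exact Complex.ofReal_eq_zero.mp (hxi.symm.trans (congrFun hx i))
  · rw [Fintype.sum_eq_add i j hij]
    · simp [x, hij, hij.symm]; ring
    · rintro k ⟨hki, hkj⟩; simp [x, hki, hkj]
  · by_cases hki : k = i
    · rw [hki]
    · obtain rfl : k = j := by_contra fun hkj => hk (by simp [x, hki, hkj])
      rw [hMij]

theorem isUnobservable_iff (hM : starPattern M) :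
    IsUnobservable h0 M ↔ (∃ j : Fin n, (j : ℕ) ≠ 0 ∧ M ⟨0, h0⟩ j = 0) ∨
      ∃ i j : Fin n, (i : ℕ) ≠ 0 ∧ (j : ℕ) ≠ 0 ∧ i ≠ j ∧ M i i = M j j := by
  constructor
  · rintro ⟨lam, x, hx, hx0, hMx⟩
    have hdiag : ∀ k : Fin n, (k : ℕ) ≠ 0 → x k ≠ 0 → (M k k : ℂ) = lam := fun k hk hxk =>
      mul_right_cancel₀ hxk (by rw [← hM.mulVec_apply hx0 hk, hMx, Pi.smul_apply, smul_eq_mul])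
    obtain ⟨i, hxi⟩ := Function.ne_iff.mp hx
    have hi : (i : ℕ) ≠ 0 := fun h => hxi (by rw [show i = ⟨0, h0⟩ from Fin.ext h, hx0]; rfl)
    by_cases hsupp : ∃ j : Fin n, (j : ℕ) ≠ 0 ∧ j ≠ i ∧ x j ≠ 0
    · obtain ⟨j, hj, hji, hxj⟩ := hsupp
      refine Or.inr ⟨i, j, hi, hj, hji.symm, ?_⟩
      exact_mod_cast (hdiag i hi hxi).trans (hdiag j hj hxj).symm
    · push Not at hsupp
      have hrow := congrFun hMx ⟨0, h0⟩
      rw [Pi.smul_apply, hx0, smul_zero, mulVec, dotProduct, Fintype.sum_eq_single i,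
        map_apply] at hrow
      · exact Or.inl ⟨i, hi, by exact_mod_cast (mul_eq_zero.mp hrow).resolve_right hxi⟩
      · intro k hki
        by_cases hk : (k : ℕ) = 0
        · rw [show k = ⟨0, h0⟩ from Fin.ext hk, hx0, mul_zero]
        · rw [hsupp k hk hki, mul_zero]
  · rintro (⟨j, hj, hMj⟩ | ⟨i, j, hi, hj, hij, hMij⟩)
    · exact isUnobservable_of_row_entry_eq_zero hM hj hMj
    · exact isUnobservable_of_diag_eq hM hi hj hij hMij


theorem exists_isUnobservable_frobNorm_eq_abs_row_entry (hA : starPattern A) {j : Fin n}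
    (hj : (j : ℕ) ≠ 0) :
    ∃ Δ, starPattern Δ ∧ frobNorm Δ = |A ⟨0, h0⟩ j| ∧ IsUnobservable h0 (A + Δ) :=
  ⟨single ⟨0, h0⟩ j (-A ⟨0, h0⟩ j), starPattern_single_of_val_eq_zero rfl j _,
    by rw [frobNorm_single, abs_neg],
    isUnobservable_of_row_entry_eq_zero (hA.add (starPattern_single_of_val_eq_zero rfl j _)) hj
      (by rw [Matrix.add_apply, single_apply_same, add_neg_cancel])⟩

theorem exists_isUnobservable_frobNorm_eq_abs_sub_diag (hA : starPattern A) {i j : Fin n}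
    (hi : (i : ℕ) ≠ 0) (hj : (j : ℕ) ≠ 0) (hij : i ≠ j) :
    ∃ Δ, starPattern Δ ∧ frobNorm Δ = |A i i - A j j| / √2 ∧ IsUnobservable h0 (A + Δ) := by
  set a := (A j j - A i i) / 2
  refine ⟨diagonal (Pi.single i a - Pi.single j a), starPattern_diagonal _, ?_,
    isUnobservable_of_diag_eq (hA.add (starPattern_diagonal _)) hi hj hij ?_⟩
  · rw [frobNorm_diagonal_single_sub_single hij, abs_div, abs_two, abs_sub_comm]
    field_simp
    rw [Real.sq_sqrt zero_le_two, mul_comm]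
  · simp [hij, hij.symm, a]; ring

theorem le_frobNorm_of_isUnobservable_add (hA : starPattern A) {Δ : Matrix (Fin n) (Fin n) ℝ}
    (hΔ : starPattern Δ) (h : IsUnobservable h0 (A + Δ)) :
    (∃ j : Fin n, (j : ℕ) ≠ 0 ∧ A ⟨0, h0⟩ j ≤ frobNorm Δ) ∨
      ∃ i j : Fin n, (i : ℕ) ≠ 0 ∧ (j : ℕ) ≠ 0 ∧ i ≠ j ∧ |A i i - A j j| / √2 ≤ frobNorm Δ := by
  rcases (isUnobservable_iff (hA.add hΔ)).mp h with ⟨j, hj, hrow⟩ | ⟨i, j, hi, hj, hij, hdiag⟩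
  · refine Or.inl ⟨j, hj, le_trans ?_ (abs_entry_le_frobNorm Δ ⟨0, h0⟩ j)⟩
    rw [Matrix.add_apply, add_eq_zero_iff_eq_neg] at hrow
    exact hrow ▸ neg_le_abs _
  · refine Or.inr ⟨i, j, hi, hj, hij,
      div_le_of_le_mul₀ (Real.sqrt_nonneg 2) (Real.sqrt_nonneg _) ?_⟩
    rw [Matrix.add_apply, Matrix.add_apply] at hdiag
    calc |A i i - A j j| = |Δ j j - Δ i i| := by congr 1; linarith
      _ ≤ √2 * frobNorm Δ := by rw [abs_sub_comm]; exact abs_sub_diag_le_frobNorm Δ hij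
      _ = frobNorm Δ * √2 := mul_comm _ _

end

/-- For a star network with positive weights and sensor node 1,
the minimal Frobenius norm of a star-structured perturbation making the pair
`(A+Δ, e₁ᵀ)` unobservable equals
`min{ a_{12},…,a_{1n}, min_{i≠j} |a_{ii}−a_{jj}|/√2 }`. -/
theorem star_network_observability_radius (n : ℕ) (hn : 3 ≤ n)
    (A : Matrix (Fin n) (Fin n) ℝ) (hstar : starPattern A)
    (hposRow : ∀ j : Fin n, (j : ℕ) ≠ 0 → 0 < A ⟨0, by omega⟩ j) :
    IsLeast
      {c : ℝ | ∃ Δ : Matrix (Fin n) (Fin n) ℝ, starPattern Δ ∧ c = frobNorm Δ ∧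
        ∃ (lam : ℂ) (x : Fin n → ℂ), x ≠ 0 ∧ x ⟨0, by omega⟩ = 0 ∧
          ((A + Δ).map (Complex.ofReal)).mulVec x = lam • x}
      (sInf ({c : ℝ | ∃ j : Fin n, (j : ℕ) ≠ 0 ∧ c = A ⟨0, by omega⟩ j} ∪
        {c : ℝ | ∃ i j : Fin n, (i : ℕ) ≠ 0 ∧ (j : ℕ) ≠ 0 ∧ i ≠ j ∧
          c = |A i i - A j j| / Real.sqrt 2})) := by
  have h0 : 0 < n := by omega
  set S := {c : ℝ | ∃ j : Fin n, (j : ℕ) ≠ 0 ∧ c = A ⟨0, h0⟩ j} ∪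
    {c : ℝ | ∃ i j : Fin n, (i : ℕ) ≠ 0 ∧ (j : ℕ) ≠ 0 ∧ i ≠ j ∧ c = |A i i - A j j| / √2}
  have hS : S.Finite :=
    ((Set.finite_range (A ⟨0, h0⟩)).subset (by rintro _ ⟨j, -, rfl⟩; exact ⟨j, rfl⟩)).union
      ((Set.finite_range fun p : Fin n × Fin n => |A p.1 p.1 - A p.2 p.2| / √2).subset
        (by rintro _ ⟨i, j, -, -, -, rfl⟩; exact ⟨(i, j), rfl⟩))
  have hS₀ : S.Nonempty := ⟨_, Or.inl ⟨⟨1, by omega⟩, one_ne_zero, rfl⟩⟩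
  change IsLeast {c | ∃ Δ, starPattern Δ ∧ c = frobNorm Δ ∧ IsUnobservable h0 (A + Δ)} (sInf S)
  constructor
  · rcases hS₀.csInf_mem hS with ⟨j, hj, hc⟩ | ⟨i, j, hi, hj, hij, hc⟩
    · obtain ⟨Δ, hΔ, hnorm, hunobs⟩ := exists_isUnobservable_frobNorm_eq_abs_row_entry hstar hj
      exact ⟨Δ, hΔ, by rw [hc, hnorm, abs_of_pos (hposRow j hj)], hunobs⟩
    · obtain ⟨Δ, hΔ, hnorm, hunobs⟩ :=
        exists_isUnobservable_frobNorm_eq_abs_sub_diag hstar hi hj hij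
      exact ⟨Δ, hΔ, hc.trans hnorm.symm, hunobs⟩
  · rintro _ ⟨Δ, hΔ, rfl, hunobs⟩
    rcases le_frobNorm_of_isUnobservable_add hstar hΔ hunobs with
      ⟨j, hj, hle⟩ | ⟨i, j, hi, hj, hij, hle⟩
    · exact csInf_le_of_le hS.bddBelow (Or.inl ⟨j, hj, rfl⟩) hle
    · exact csInf_le_of_le hS.bddBelow (Or.inr ⟨i, j, hi, hj, hij, rfl⟩) hle
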